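/- Let (A,B) be a maximal c/d-cross-intersecting pair of 2^{[n]} with 0 < c/d < 1 irreducible. Then B is closed under intersection: for any B₁, B₂ ∈ B, the set B₁ ∩ B₂ also satisfies |A ∩ (B₁ ∩ B₂)| = (c/d)|B₁ ∩ B₂| for every A ∈ A. -/

import Mathlib

/-!
Identify a set with its 0/1 indicator vector in `ℚⁿ`, and let `W` be the span of the indicators of
the members of `B`. If `W` has dimension `k`, at most `k` coordinates `s` determine every vector
of `W`, so `B` injects into the subsets of `s` and `|B| ≤ 2ᵏ`. The cross-intersection condition
says that the differences of indicators of members of `A` are orthogonal to `W`, and the dot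
product is anisotropic over `ℚ`, so the same count gives `|A| ≤ 2ⁿ⁻ᵏ`. Maximality forces
`|B| = 2ᵏ`: every subset of `s` is the trace on `s` of a member of `B`. Comparing traces on `s`,
members of `B` with disjoint traces are disjoint and their union lies in `B`; writing
`b₁ = x ∪ y₁`, `b₂ = x ∪ y₂` with `x` the member of trace `b₁ ∩ b₂ ∩ s`, this gives
`b₁ ∩ b₂ = x ∈ B`.
-/

open Finset Module

variable {ι K : Type*}

theorem Submodule.finrank_add_finrank_orthogonalBilin_dotProduct_le [Fintype ι] [Field K]
    [LinearOrder K] [IsStrictOrderedRing K] (W : Submodule K (ι → K)) :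
    finrank K W + finrank K (W.orthogonalBilin (dotProductBilin K K)) ≤ Fintype.card ι := by
  have hbot : W ⊓ W.orthogonalBilin (dotProductBilin K K) = ⊥ :=
    eq_bot_iff.2 fun x ⟨hxW, hx⟩ => dotProduct_self_eq_zero.1 (hx x hxW)
  have := Submodule.finrank_sup_add_finrank_inf_eq W (W.orthogonalBilin (dotProductBilin K K))
  rw [hbot, finrank_bot, add_zero] at this
  rw [← this, ← Module.finrank_fintype_fun_eq_card (R := K)]
  exact Submodule.finrank_le _

variable [DecidableEq ι]

variable (K) in
def charVec [Zero K] [One K] (s : Finset ι) : ι → K := fun i => if i ∈ s then 1 else 0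

section Field

variable [Field K]

theorem charVec_injective : Function.Injective (charVec K : Finset ι → ι → K) := by
  intro s t h
  ext i
  have := congrFun h i
  by_cases hs : i ∈ s <;> by_cases ht : i ∈ t <;> simp_all [charVec]

theorem charVec_union_of_disjoint {s t : Finset ι} (h : Disjoint s t) :
    charVec K (s ∪ t) = charVec K s + charVec K t := by
  funext i
  by_cases hs : i ∈ s <;> by_cases ht : i ∈ t
  · exact absurd ht (Finset.disjoint_left.1 h hs)
  all_goals simp [charVec, hs, ht]

variable [Fintype ι]

theorem charVec_dotProduct_charVec (s t : Finset ι) :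
    charVec K s ⬝ᵥ charVec K t = #(s ∩ t) := by
  simp only [dotProduct, charVec, mul_ite, mul_one, mul_zero, ← ite_and, sum_boole]
  congr 2
  ext
  simp [and_comm]

theorem Submodule.exists_finset_card_le_finrank (W : Submodule K (ι → K)) :
    ∃ s : Finset ι, #s ≤ finrank K W ∧ ∀ w ∈ W, (∀ i ∈ s, w i = 0) → w = 0 := by
  let φ : ι → Dual K W := fun i => (LinearMap.proj i).comp W.subtype
  obtain ⟨κ, a, ha, hspan, hli⟩ := exists_linearIndependent' K φ
  have : Finite κ := Finite.of_injective a ha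
  have : Fintype κ := Fintype.ofFinite κ
  refine ⟨univ.image a, ?_, fun w hw hs => ?_⟩
  · rw [card_image_of_injective _ ha, card_univ, ← Subspace.dual_finrank_eq]
    exact hli.fintype_card_le_finrank
  · have hker : Submodule.span K (Set.range (φ ∘ a)) ≤ LinearMap.ker (Dual.eval K W ⟨w, hw⟩) := by
      rw [Submodule.span_le]
      rintro _ ⟨k, rfl⟩
      exact hs (a k) (mem_image_of_mem a (mem_univ k))
    rw [hspan] at hker
    funext i
    exact hker (Submodule.subset_span ⟨i, rfl⟩)

end Field

section Coordinates

variable [Field K] {V : Submodule K (ι → K)} {s : Finset ι} {F : Finset (Finset ι)}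

theorem injOn_inter_of_charVec_sub_mem (hs : ∀ w ∈ V, (∀ i ∈ s, w i = 0) → w = 0)
    (hF : ∀ a ∈ F, ∀ b ∈ F, charVec K a - charVec K b ∈ V) :
    Set.InjOn (· ∩ s) (F : Set (Finset ι)) := by
  intro a ha b hb hab
  apply charVec_injective (K := K)
  rw [← sub_eq_zero]
  refine hs _ (hF a ha b hb) fun i hi => ?_
  have hiab : i ∈ a ↔ i ∈ b := by simpa [hi] using congrArg (i ∈ ·) hab
  simp [charVec, hiab]

theorem card_le_two_pow_of_charVec_sub_mem (hs : ∀ w ∈ V, (∀ i ∈ s, w i = 0) → w = 0)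
    (hF : ∀ a ∈ F, ∀ b ∈ F, charVec K a - charVec K b ∈ V) :
    #F ≤ 2 ^ #s :=
  (card_le_card_of_injOn _ (fun _ _ => mem_powerset.2 inter_subset_right)
    (injOn_inter_of_charVec_sub_mem hs hF)).trans (card_powerset s).le

theorem exists_inter_eq_of_card_eq_two_pow (hs : ∀ w ∈ V, (∀ i ∈ s, w i = 0) → w = 0)
    (hF : ∀ a ∈ F, ∀ b ∈ F, charVec K a - charVec K b ∈ V) (hcard : #F = 2 ^ #s)
    {t : Finset ι} (ht : t ⊆ s) : ∃ b ∈ F, b ∩ s = t := by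
  have himage : F.image (· ∩ s) = s.powerset :=
    eq_of_subset_of_card_le (image_subset_iff.2 fun _ _ => mem_powerset.2 inter_subset_right)
      (by rw [card_image_of_injOn (injOn_inter_of_charVec_sub_mem hs hF), card_powerset, hcard])
  have ht' : t ∈ F.image (· ∩ s) := himage ▸ mem_powerset.2 ht
  simpa using ht'

end Coordinates

section Closure

variable [Field K] [CharZero K] {W : Submodule K (ι → K)} {s : Finset ι} {B : Finset (Finset ι)}

theorem disjoint_and_union_mem_of_forall_exists_inter_eq
    (hs : ∀ w ∈ W, (∀ i ∈ s, w i = 0) → w = 0) (hBW : ∀ b ∈ B, charVec K b ∈ W)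
    (hlift : ∀ t ⊆ s, ∃ b ∈ B, b ∩ s = t) {b b' : Finset ι} (hb : b ∈ B) (hb' : b' ∈ B)
    (hdisj : Disjoint (b ∩ s) (b' ∩ s)) : Disjoint b b' ∧ b ∪ b' ∈ B := by
  obtain ⟨u, hu, hus⟩ := hlift ((b ∪ b') ∩ s) inter_subset_right
  have hsum : charVec K u = charVec K b + charVec K b' := by
    rw [← sub_eq_zero]
    refine hs _ (sub_mem (hBW u hu) (add_mem (hBW b hb) (hBW b' hb'))) fun i hi => ?_
    have hiu : i ∈ u ↔ i ∈ b ∨ i ∈ b' := by simpa [hi] using congrArg (i ∈ ·) hus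
    have hnot : ¬(i ∈ b ∧ i ∈ b') := fun h =>
      Finset.disjoint_left.1 hdisj (mem_inter.2 ⟨h.1, hi⟩) (mem_inter.2 ⟨h.2, hi⟩)
    by_cases hib : i ∈ b <;> by_cases hib' : i ∈ b' <;> simp_all [charVec]
  -- a point of `b ∩ b'` would give `charVec K u` the value `2`
  have hbb' : Disjoint b b' := by
    refine Finset.disjoint_left.2 fun i hib hib' => ?_
    have hi := congrFun hsum i
    simp only [charVec, Pi.add_apply, hib, hib', if_true] at hi
    split_ifs at hi <;> norm_num at hi
  refine ⟨hbb', ?_⟩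
  rwa [← charVec_injective (hsum.trans (charVec_union_of_disjoint hbb').symm)]

theorem inter_mem_of_forall_exists_inter_eq
    (hs : ∀ w ∈ W, (∀ i ∈ s, w i = 0) → w = 0) (hBW : ∀ b ∈ B, charVec K b ∈ W)
    (hlift : ∀ t ⊆ s, ∃ b ∈ B, b ∩ s = t) {b₁ b₂ : Finset ι} (hb₁ : b₁ ∈ B) (hb₂ : b₂ ∈ B) :
    b₁ ∩ b₂ ∈ B := by
  have hinj := injOn_inter_of_charVec_sub_mem hs fun a ha b hb => sub_mem (hBW a ha) (hBW b hb)
  have hunion {b b' : Finset ι} (hb : b ∈ B) (hb' : b' ∈ B) :=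
    disjoint_and_union_mem_of_forall_exists_inter_eq hs hBW hlift hb hb'
  obtain ⟨x, hx, hxs⟩ := hlift (b₁ ∩ b₂ ∩ s) inter_subset_right
  have hsplit {b b' y : Finset ι} (hb : b ∈ B) (hy : y ∈ B) (hys : y ∩ s = b \ b' ∩ s)
      (hxb : x ∩ s = b ∩ b' ∩ s) : y ∪ x = b := by
    refine hinj (hunion hy hx ?_).2 hb ?_
    · rw [hys, hxb]
      exact (disjoint_sdiff_inter b b').mono inter_subset_left inter_subset_left
    · change (y ∪ x) ∩ s = b ∩ s
      rw [union_inter_distrib_right, hys, hxb, ← union_inter_distrib_right, sdiff_union_inter]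
  obtain ⟨y₁, hy₁, hy₁s⟩ := hlift (b₁ \ b₂ ∩ s) inter_subset_right
  obtain ⟨y₂, hy₂, hy₂s⟩ := hlift (b₂ \ b₁ ∩ s) inter_subset_right
  have hy : Disjoint y₁ y₂ := (hunion hy₁ hy₂ (by
    rw [hy₁s, hy₂s]
    exact disjoint_sdiff_sdiff.mono inter_subset_left inter_subset_left)).1
  rw [← hsplit hb₁ hy₁ hy₁s hxs, ← hsplit hb₂ hy₂ hy₂s (by rw [hxs, inter_comm b₁]),
    ← inter_union_distrib_right, disjoint_iff_inter_eq_empty.1 hy, empty_union]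
  exact hx

end Closure

theorem Finset.inter_mem_of_card_mul_card_eq_two_pow [Fintype ι] {A B : Finset (Finset ι)}
    (hA : ∀ a ∈ A, ∀ a' ∈ A, ∀ b ∈ B, #(a ∩ b) = #(a' ∩ b))
    (hcard : #A * #B = 2 ^ Fintype.card ι) {b₁ b₂ : Finset ι} (hb₁ : b₁ ∈ B) (hb₂ : b₂ ∈ B) :
    b₁ ∩ b₂ ∈ B := by
  set W := Submodule.span ℚ (charVec ℚ '' (B : Set (Finset ι)))
  set U := W.orthogonalBilin (dotProductBilin ℚ ℚ)
  have hBW : ∀ b ∈ B, charVec ℚ b ∈ W := fun b hb => Submodule.subset_span ⟨b, hb, rfl⟩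
  have hBB : ∀ b ∈ B, ∀ b' ∈ B, charVec ℚ b - charVec ℚ b' ∈ W :=
    fun b hb b' hb' => sub_mem (hBW b hb) (hBW b' hb')
  have hAA : ∀ a ∈ A, ∀ a' ∈ A, charVec ℚ a - charVec ℚ a' ∈ U := by
    intro a ha a' ha' w hw
    have hker : W ≤ LinearMap.ker ((dotProductBilin ℚ ℚ).flip (charVec ℚ a - charVec ℚ a')) := by
      refine Submodule.span_le.2 ?_
      rintro _ ⟨b, hb, rfl⟩
      simp [charVec_dotProduct_charVec, inter_comm b, hA a ha a' ha' b hb]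
    exact hker hw
  obtain ⟨s, hsW, hs⟩ := W.exists_finset_card_le_finrank
  obtain ⟨t, htU, ht⟩ := U.exists_finset_card_le_finrank
  have hBs : #B ≤ 2 ^ #s := card_le_two_pow_of_charVec_sub_mem hs hBB
  have hAt : #A ≤ 2 ^ #t := card_le_two_pow_of_charVec_sub_mem ht hAA
  have hst : #s + #t ≤ Fintype.card ι :=
    (add_le_add hsW htU).trans W.finrank_add_finrank_orthogonalBilin_dotProduct_le
  have hBs' : #B = 2 ^ #s := by
    refine hBs.antisymm (Nat.le_of_mul_le_mul_left ?_ (pow_pos two_pos #t))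
    calc 2 ^ #t * 2 ^ #s ≤ 2 ^ Fintype.card ι := by
          rw [← pow_add]; exact pow_le_pow_right₀ one_le_two (by omega)
      _ = #A * #B := hcard.symm
      _ ≤ 2 ^ #t * #B := Nat.mul_le_mul_right _ hAt
  exact inter_mem_of_forall_exists_inter_eq hs hBW
    (fun _ => exists_inter_eq_of_card_eq_two_pow hs hBB hBs') hb₁ hb₂

theorem maximal_B_inter_closed_general (n c d : ℕ) (hcd : c < d)
    (A B : Finset (Finset (Fin n)))
    (hcross : ∀ a ∈ A, ∀ b ∈ B, d * (a ∩ b).card = c * b.card)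
    (hmax : A.card * B.card = 2 ^ n) :
    ∀ b₁ ∈ B, ∀ b₂ ∈ B, ∀ a ∈ A,
      d * (a ∩ (b₁ ∩ b₂)).card = c * (b₁ ∩ b₂).card := by
  have hA : ∀ a ∈ A, ∀ a' ∈ A, ∀ b ∈ B, #(a ∩ b) = #(a' ∩ b) := fun a ha a' ha' b hb =>
    Nat.eq_of_mul_eq_mul_left (by omega) ((hcross a ha b hb).trans (hcross a' ha' b hb).symm)
  intro b₁ hb₁ b₂ hb₂ a ha
  exact hcross a ha _ (inter_mem_of_card_mul_card_eq_two_pow hA (by simpa using hmax) hb₁ hb₂)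

theorem maximal_B_inter_closed (n c d : ℕ) (hn : 0 < n) (hc : 0 < c) (hcd : c < d)
    (hcop : Nat.Coprime c d)
    (A B : Finset (Finset (Fin n)))
    (hcross : ∀ a ∈ A, ∀ b ∈ B, d * (a ∩ b).card = c * b.card)
    (hmax : A.card * B.card = 2 ^ n) :
    ∀ b₁ ∈ B, ∀ b₂ ∈ B, ∀ a ∈ A,
      d * (a ∩ (b₁ ∩ b₂)).card = c * (b₁ ∩ b₂).card :=
  maximal_B_inter_closed_general n c d hcd A B hcross hmax
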